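/- Let Q be a finite quiver, K a field, and let M and N be nonzero representations of Q over K such that N admits a filtration 0 = N_0 ⊂ N_1 ⊂ ⋯ ⊂ N_t = N by subrepresentations with N_k/N_{k−1} ≅ M for every 1 ≤ k ≤ t. Then D(N) = D(M). -/

import Mathlib

attribute [local instance] Classical.propDecidable

/-- A finite quiver: finite sets of vertices and arrows with source and target maps. -/
structure FinQuiver where
  V : Type
  A : Type
  [fintypeV : Fintype V]
  [decEqV : DecidableEq V]
  [fintypeA : Fintype A]
  [decEqA : DecidableEq A]
  s : A → V
  t : A → V

attribute [instance] FinQuiver.fintypeV FinQuiver.decEqV FinQuiver.fintypeA FinQuiver.decEqA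

/-- A finite-dimensional representation of a finite quiver over a field `K`. -/
structure QRep (K : Type) [Field K] (Q : FinQuiver) where
  M : Q.V → Type
  [acg : ∀ i, AddCommGroup (M i)]
  [mod : ∀ i, Module K (M i)]
  [fd : ∀ i, FiniteDimensional K (M i)]
  φ : ∀ a : Q.A, M (Q.s a) →ₗ[K] M (Q.t a)

attribute [instance] QRep.acg QRep.mod QRep.fd

/-- A subrepresentation: a subspace at every vertex, compatible with the arrow maps. -/
structure QSubRep {K : Type} [Field K] {Q : FinQuiver} (R : QRep K Q) where
  L : ∀ i, Submodule K (R.M i)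
  compat : ∀ a : Q.A, ∀ x ∈ L (Q.s a), R.φ a x ∈ L (Q.t a)

def QSubRep.le {K : Type} [Field K] {Q : FinQuiver} {R : QRep K Q} (N N' : QSubRep R) : Prop :=
  ∀ i, N.L i ≤ N'.L i

/-- The dimension vector of a representation. -/
noncomputable def QRep.dimVec {K : Type} [Field K] {Q : FinQuiver} (R : QRep K Q) (i : Q.V) : ℕ :=
  Module.finrank K (R.M i)

/-- Standard inner product of a real vector with a dimension vector. -/
def stabInner {Q : FinQuiver} (v : Q.V → ℝ) (d : Q.V → ℕ) : ℝ :=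
  ∑ i, v i * (d i : ℝ)

/-- `v`-semistability of a representation. -/
def IsSemistable {K : Type} [Field K] {Q : FinQuiver} (R : QRep K Q) (v : Q.V → ℝ) : Prop :=
  stabInner v R.dimVec = 0 ∧
    ∀ N : QSubRep R, stabInner v (fun i => Module.finrank K (N.L i)) ≤ 0

/-- The stability space of a representation. -/
def stabSpace {K : Type} [Field K] {Q : FinQuiver} (R : QRep K Q) : Set (Q.V → ℝ) :=
  {v | IsSemistable R v}

/-- `v`-stability of a representation. -/
def IsStable {K : Type} [Field K] {Q : FinQuiver} (R : QRep K Q) (v : Q.V → ℝ) : Prop :=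
  stabInner v R.dimVec = 0 ∧
    ∀ N : QSubRep R, (∃ i, N.L i ≠ ⊥) → (∃ i, N.L i ≠ ⊤) →
      stabInner v (fun i => Module.finrank K (N.L i)) < 0

/-- The thin sincere representation with identity maps: `K` at every vertex. -/
noncomputable def thinRep (K : Type) [Field K] (Q : FinQuiver) : QRep K Q where
  M _ := K
  φ _ := LinearMap.id

/-- The set of all finite non-negative real linear combinations of elements of `X`. -/
def coneSpan {E : Type} [AddCommMonoid E] [Module ℝ E] (X : Set E) : Set E :=
  {x | ∃ (n : ℕ) (c : Fin n → ℝ) (f : Fin n → E),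
    (∀ j, 0 ≤ c j) ∧ (∀ j, f j ∈ X) ∧ x = ∑ j, c j • f j}

/-- The standard basis vector of `ℝ^{Q₀}` at a vertex. -/
noncomputable def eVec (Q : FinQuiver) (i : Q.V) : Q.V → ℝ := Pi.single i 1

/-- A subrepresentation viewed as a representation in its own right. -/
noncomputable def QSubRep.toRep {K : Type} [Field K] {Q : FinQuiver} {R : QRep K Q}
    (N : QSubRep R) : QRep K Q where
  M i := ↥(N.L i)
  φ a := (R.φ a).restrict (fun x hx => N.compat a x hx)

/-- The quotient of a representation by a subrepresentation. -/
noncomputable def QRep.quotBy {K : Type} [Field K] {Q : FinQuiver} (R : QRep K Q)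
    (N : QSubRep R) : QRep K Q where
  M i := R.M i ⧸ N.L i
  φ a := Submodule.mapQ _ _ (R.φ a) (fun x hx => N.compat a x hx)

/-- The quotient `N'/N` of nested subrepresentations, as a representation. -/
noncomputable def quotRep {K : Type} [Field K] {Q : FinQuiver} (R : QRep K Q)
    (N N' : QSubRep R) (h : QSubRep.le N N') : QRep K Q where
  M i := ↥(N'.L i) ⧸ Submodule.comap (N'.L i).subtype (N.L i)
  φ a := Submodule.mapQ _ _ ((R.φ a).restrict (fun x hx => N'.compat a x hx))
    (by
      intro x hx
      simp only [Submodule.mem_comap, Submodule.subtype_apply,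
        LinearMap.restrict_apply] at hx ⊢
      exact N.compat a _ hx)

/-- A representation is nonzero if some vertex space is nonzero. -/
def QRep.Nonzero {K : Type} [Field K] {Q : FinQuiver} (R : QRep K Q) : Prop :=
  ∃ i, Module.finrank K (R.M i) ≠ 0

/-- Indecomposability: nonzero and admitting no internal direct sum decomposition into two
nonzero subrepresentations. -/
def Indecomposable {K : Type} [Field K] {Q : FinQuiver} (R : QRep K Q) : Prop :=
  R.Nonzero ∧
    ¬∃ U W : QSubRep R, (∃ i, U.L i ≠ ⊥) ∧ (∃ i, W.L i ≠ ⊥) ∧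
      (∀ i, U.L i ⊓ W.L i = ⊥) ∧ (∀ i, U.L i ⊔ W.L i = ⊤)

/-- Isomorphism of representations. -/
def RepIso {K : Type} [Field K] {Q : FinQuiver} (R R' : QRep K Q) : Prop :=
  ∃ f : ∀ i, R.M i ≃ₗ[K] R'.M i,
    ∀ (a : Q.A) (x : R.M (Q.s a)), f (Q.t a) (R.φ a x) = R'.φ a (f (Q.s a) x)

/-- The support of a representation. -/
def QRep.supp {K : Type} [Field K] {Q : FinQuiver} (R : QRep K Q) : Set Q.V :=
  {i | Module.finrank K (R.M i) ≠ 0}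

/-- The stability space restricted to the coordinate subspace of the support. -/
def Dsupp {K : Type} [Field K] {Q : FinQuiver} (R : QRep K Q) : Set (Q.V → ℝ) :=
  stabSpace R ∩ {v | ∀ i, i ∉ R.supp → v i = 0}

/-- Standard inner product on `ℝ^V`. -/
def rInner {V : Type} [Fintype V] (a v : V → ℝ) : ℝ := ∑ i, a i * v i

/-- A face of a polyhedral cone. -/
def IsFace {V : Type} [Fintype V] (C F : Set (V → ℝ)) : Prop :=
  ∃ a : V → ℝ, (∀ v ∈ C, rInner a v ≤ 0) ∧ F = C ∩ {v | rInner a v = 0}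

/-- The dimension of the linear span of a subset of `ℝ^V`. -/
noncomputable def coneDim {V : Type} [Fintype V] (F : Set (V → ℝ)) : ℕ :=
  Module.finrank ℝ ↥(Submodule.span ℝ F)

/-- A facet: a face of codimension one. -/
def IsFacet {V : Type} [Fintype V] (C F : Set (V → ℝ)) : Prop :=
  IsFace C F ∧ coneDim F + 1 = coneDim C

/-- Composability of a list of arrows (a directed path). -/
def PathComposable {Q : FinQuiver} : List Q.A → Prop
  | [] => True
  | [_] => True
  | a :: b :: l => Q.t a = Q.s b ∧ PathComposable (b :: l)

/-
Every factor of the filtration has the dimension vector of `M`, so `dim N = t • dim M` with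
`t ≠ 0`. If `N` is `v`-semistable, so is `M`: it is isomorphic to the bottom piece `F₁` of the
filtration, whose subrepresentations are subrepresentations of `N`. Conversely, for a
subrepresentation `S` of `N` the images of the `S ∩ Fⱼ₊₁` in the factors `Fⱼ₊₁ / Fⱼ ≅ M` have
dimension vectors adding up to `dim S`, so semistability of `M` bounds `⟨v, dim S⟩` term by term.
-/

open Module Submodule

section LinearAlgebra

variable {K V : Type} [Field K] [AddCommGroup V] [Module K V]

lemma finrank_comap_subtype (p q : Submodule K V) :
    finrank K (q.comap p.subtype) = finrank K ↥(q ⊓ p) := by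
  rw [inf_comm, ← map_comap_subtype]
  exact (equivSubtypeMap p _).finrank_eq

lemma finrank_map_mkQ_add_finrank_inf [FiniteDimensional K V] (p q : Submodule K V) :
    finrank K (p.map q.mkQ) + finrank K ↥(q ⊓ p) = finrank K p := by
  have h := LinearMap.finrank_range_add_finrank_ker (q.mkQ.domRestrict p)
  rwa [LinearMap.range_domRestrict, LinearMap.ker_domRestrict, ker_mkQ,
    finrank_comap_subtype] at h

lemma finrank_comap_mkQ [FiniteDimensional K V] (q : Submodule K V) (L : Submodule K (V ⧸ q)) :
    finrank K (L.comap q.mkQ) = finrank K L + finrank K q := by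
  have h := finrank_map_mkQ_add_finrank_inf (L.comap q.mkQ) q
  rw [map_comap_eq_of_surjective q.mkQ_surjective,
    inf_eq_left.2 (le_comap_mkQ q L)] at h
  exact h.symm

variable [FiniteDimensional K V] {A B : Submodule K V}

lemma finrank_quotient_comap_subtype_add (hBA : B ≤ A) :
    finrank K (A ⧸ B.comap A.subtype) + finrank K B = finrank K A := by
  rw [← (B.comap A.subtype).finrank_quotient_add_finrank, finrank_comap_subtype,
    inf_eq_left.2 hBA]

lemma finrank_map_mkQ_comap_subtype_add (hBA : B ≤ A) (W : Submodule K V) :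
    finrank K ((W.comap A.subtype).map (B.comap A.subtype).mkQ) + finrank K ↥(W ⊓ B) =
      finrank K ↥(W ⊓ A) := by
  have h := finrank_map_mkQ_add_finrank_inf (W.comap A.subtype) (B.comap A.subtype)
  rwa [← comap_inf, finrank_comap_subtype, finrank_comap_subtype, inf_comm B W,
    inf_assoc, inf_eq_left.2 hBA] at h

lemma finrank_map_subtype_comap_mkQ (hBA : B ≤ A)
    (L : Submodule K (A ⧸ B.comap A.subtype)) :
    finrank K ((L.comap (B.comap A.subtype).mkQ).map A.subtype) = finrank K L + finrank K B := by
  rw [finrank_map_subtype_eq, finrank_comap_mkQ, finrank_comap_subtype, inf_eq_left.2 hBA]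

end LinearAlgebra

lemma Fin.apply_last_eq_sum_add_apply_zero {A : Type} [AddCommMonoid A] {t : ℕ}
    (g : Fin (t + 1) → A) (d : Fin t → A) (h : ∀ j, g j.succ = d j + g j.castSucc) :
    g (Fin.last t) = ∑ j, d j + g 0 := by
  induction t with
  | zero => simp
  | succ n ih =>
    rw [Fin.sum_univ_castSucc, ← Fin.succ_last, h, add_comm (∑ j, _), add_assoc]
    congr 1
    exact ih (fun k => g k.castSucc) (fun j => d j.castSucc) fun j => h j.castSucc

section Representations

variable {K : Type} [Field K] {Q : FinQuiver}

lemma stabInner_add (v : Q.V → ℝ) (d e : Q.V → ℕ) :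
    stabInner v (d + e) = stabInner v d + stabInner v e := by
  simp only [stabInner, Pi.add_apply, Nat.cast_add, mul_add, Finset.sum_add_distrib]

lemma stabInner_zero (v : Q.V → ℝ) : stabInner v 0 = 0 := by
  simp [stabInner]

lemma stabInner_sum {ι : Type} (v : Q.V → ℝ) (s : Finset ι) (d : ι → Q.V → ℕ) :
    stabInner v (∑ j ∈ s, d j) = ∑ j ∈ s, stabInner v (d j) :=
  map_sum (AddMonoidHom.mk' (stabInner v) (stabInner_add v)) d s

lemma stabInner_nsmul (v : Q.V → ℝ) (n : ℕ) (d : Q.V → ℕ) :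
    stabInner v (n • d) = n * stabInner v d := by
  rw [← nsmul_eq_mul]
  exact map_nsmul (AddMonoidHom.mk' (stabInner v) (stabInner_add v)) n d

noncomputable def QSubRep.dimVec {R : QRep K Q} (S : QSubRep R) (i : Q.V) : ℕ :=
  finrank K (S.L i)

lemma QSubRep.dimVec_eq_zero {R : QRep K Q} {S : QSubRep R} (hS : ∀ i, S.L i = ⊥) :
    S.dimVec = 0 := by
  ext i
  simp [QSubRep.dimVec, hS i]

lemma QSubRep.dimVec_eq_of_eq_top {R : QRep K Q} {S : QSubRep R} (hS : ∀ i, S.L i = ⊤) :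
    S.dimVec = R.dimVec := by
  ext i
  rw [QSubRep.dimVec, hS i, finrank_top, QRep.dimVec]

lemma quotRep_dimVec_add {R : QRep K Q} {N N' : QSubRep R} (h : N.le N') :
    (quotRep R N N' h).dimVec + N.dimVec = N'.dimVec := by
  ext i
  exact finrank_quotient_comap_subtype_add (h i)

noncomputable def QSubRep.quotImage {R : QRep K Q} (S : QSubRep R) {N N' : QSubRep R}
    (h : N.le N') : QSubRep (quotRep R N N' h) where
  L i := ((S.L i).comap (N'.L i).subtype).map ((N.L i).comap (N'.L i).subtype).mkQ
  compat a := by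
    rintro _ ⟨y, hy, rfl⟩
    exact ⟨(R.φ a).restrict (fun x hx => N'.compat a x hx) y, S.compat a _ hy, rfl⟩

lemma QSubRep.quotImage_dimVec_add {R : QRep K Q} (S : QSubRep R) {N N' : QSubRep R}
    (h : N.le N') (i : Q.V) :
    (S.quotImage h).dimVec i + finrank K ↥(S.L i ⊓ N.L i) = finrank K ↥(S.L i ⊓ N'.L i) :=
  finrank_map_mkQ_comap_subtype_add (h i) (S.L i)

noncomputable def QSubRep.quotPreimage {R : QRep K Q} {N N' : QSubRep R} {h : N.le N'}
    (L : QSubRep (quotRep R N N' h)) : QSubRep R where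
  L i := ((L.L i).comap ((N.L i).comap (N'.L i).subtype).mkQ).map (N'.L i).subtype
  compat a := by
    rintro _ ⟨y, hy, rfl⟩
    exact ⟨(R.φ a).restrict (fun x hx => N'.compat a x hx) y, L.compat a _ hy, rfl⟩

lemma QSubRep.quotPreimage_dimVec {R : QRep K Q} {N N' : QSubRep R} {h : N.le N'}
    (L : QSubRep (quotRep R N N' h)) :
    (QSubRep.quotPreimage L).dimVec = L.dimVec + N.dimVec := by
  ext i
  exact finrank_map_subtype_comap_mkQ (h i) (L.L i)

lemma RepIso.symm {R R' : QRep K Q} (h : RepIso R R') : RepIso R' R := by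
  obtain ⟨f, hf⟩ := h
  refine ⟨fun i => (f i).symm, fun a x => (f (Q.t a)).injective ?_⟩
  rw [LinearEquiv.apply_symm_apply, hf, LinearEquiv.apply_symm_apply]

lemma RepIso.dimVec_eq {R R' : QRep K Q} (h : RepIso R R') : R.dimVec = R'.dimVec := by
  obtain ⟨f, -⟩ := h
  ext i
  exact (f i).finrank_eq

lemma RepIso.exists_qSubRep_dimVec_eq {R R' : QRep K Q} (h : RepIso R R') (S : QSubRep R) :
    ∃ S' : QSubRep R', S'.dimVec = S.dimVec := by
  obtain ⟨f, hf⟩ := h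
  refine ⟨⟨fun i => (S.L i).map (f i).toLinearMap, ?_⟩, funext fun i => (f i).finrank_map_eq _⟩
  rintro a _ ⟨y, hy, rfl⟩
  exact ⟨R.φ a y, S.compat a y hy, hf a y⟩

lemma IsSemistable.of_repIso {R R' : QRep K Q} {v : Q.V → ℝ} (hR : IsSemistable R v)
    (h : RepIso R R') : IsSemistable R' v := by
  refine ⟨h.dimVec_eq ▸ hR.1, fun S => ?_⟩
  obtain ⟨S', hS'⟩ := h.symm.exists_qSubRep_dimVec_eq S
  change stabInner v S.dimVec ≤ 0
  rw [← hS']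
  exact hR.2 S'

lemma IsSemistable.stabInner_add_le_zero {R : QRep K Q} {v : Q.V → ℝ} (hR : IsSemistable R v)
    {N N' : QSubRep R} {h : N.le N'} (L : QSubRep (quotRep R N N' h)) :
    stabInner v L.dimVec + stabInner v N.dimVec ≤ 0 := by
  rw [← stabInner_add, ← QSubRep.quotPreimage_dimVec]
  exact hR.2 (QSubRep.quotPreimage L)

section Filtration

variable {R : QRep K Q} {t : ℕ} (F : Fin (t + 1) → QSubRep R)

lemma dimVec_eq_sum_quotRep (h0 : ∀ i, (F 0).L i = ⊥) (hlast : ∀ i, (F (Fin.last t)).L i = ⊤)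
    (hmono : ∀ j : Fin t, (F j.castSucc).le (F j.succ)) :
    R.dimVec = ∑ j, (quotRep R (F j.castSucc) (F j.succ) (hmono j)).dimVec := by
  rw [← QSubRep.dimVec_eq_of_eq_top hlast,
    Fin.apply_last_eq_sum_add_apply_zero (fun k => (F k).dimVec) _
      fun j => (quotRep_dimVec_add _).symm,
    QSubRep.dimVec_eq_zero h0, add_zero]

lemma QSubRep.dimVec_eq_sum_quotImage (S : QSubRep R) (h0 : ∀ i, (F 0).L i = ⊥)
    (hlast : ∀ i, (F (Fin.last t)).L i = ⊤) (hmono : ∀ j : Fin t, (F j.castSucc).le (F j.succ)) :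
    S.dimVec = ∑ j, (S.quotImage (hmono j)).dimVec := by
  have h := Fin.apply_last_eq_sum_add_apply_zero (fun k i => finrank K ↥(S.L i ⊓ (F k).L i))
    (fun j => (S.quotImage (hmono j)).dimVec)
    fun j => funext fun i => (S.quotImage_dimVec_add (hmono j) i).symm
  ext i
  have hi := congr_fun h i
  simp only [Pi.add_apply] at hi
  rwa [h0 i, hlast i, inf_top_eq, inf_bot_eq, finrank_bot, add_zero] at hi

lemma isSemistable_of_filtration {v : Q.V → ℝ} (h0 : ∀ i, (F 0).L i = ⊥)
    (hlast : ∀ i, (F (Fin.last t)).L i = ⊤) (hmono : ∀ j : Fin t, (F j.castSucc).le (F j.succ))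
    (hF : ∀ j, IsSemistable (quotRep R (F j.castSucc) (F j.succ) (hmono j)) v) :
    IsSemistable R v := by
  refine ⟨?_, fun S => ?_⟩
  · rw [dimVec_eq_sum_quotRep F h0 hlast hmono, stabInner_sum]
    exact Finset.sum_eq_zero fun j _ => (hF j).1
  · change stabInner v S.dimVec ≤ 0
    rw [S.dimVec_eq_sum_quotImage F h0 hlast hmono, stabInner_sum]
    exact Finset.sum_nonpos fun j _ => (hF j).2 _

end Filtration

end Representations

theorem stability_space_of_filtered_module_general
    (K : Type) [Field K] (Q : FinQuiver) (M N : QRep K Q)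
    (hN : ∃ i, Module.finrank K (N.M i) ≠ 0)
    (t : ℕ) (F : Fin (t + 1) → QSubRep N)
    (h0 : ∀ i, (F 0).L i = ⊥) (hlast : ∀ i, (F (Fin.last t)).L i = ⊤)
    (hmono : ∀ j : Fin t, QSubRep.le (F j.castSucc) (F j.succ))
    (hfac : ∀ j : Fin t, RepIso (quotRep N (F j.castSucc) (F j.succ) (hmono j)) M) :
    stabSpace N = stabSpace M := by
  have hdim : N.dimVec = t • M.dimVec := by
    simp [dimVec_eq_sum_quotRep F h0 hlast hmono, fun j => (hfac j).dimVec_eq]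
  have ht : 0 < t := by
    obtain ⟨i, hi⟩ := hN
    exact Nat.pos_of_ne_zero fun h => hi (by simpa [h, QRep.dimVec] using congr_fun hdim i)
  ext v
  refine ⟨fun hNv => ?_, fun hMv => isSemistable_of_filtration F h0 hlast hmono
    fun j => hMv.of_repIso (hfac j).symm⟩
  let j₀ : Fin t := ⟨0, ht⟩
  refine IsSemistable.of_repIso ⟨?_, fun L => ?_⟩ (hfac j₀)
  · rw [(hfac j₀).dimVec_eq]
    have h := hNv.1
    rw [hdim, stabInner_nsmul] at h
    exact (mul_eq_zero.1 h).resolve_left (Nat.cast_ne_zero.2 ht.ne')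
  · have hbot : (F j₀.castSucc).dimVec = 0 := QSubRep.dimVec_eq_zero h0
    have h := hNv.stabInner_add_le_zero L
    rwa [hbot, stabInner_zero, add_zero] at h

/-- If the nonzero representation `N` admits a filtration all of whose
successive quotients are isomorphic to the nonzero representation `M`, then
`D(N) = D(M)`. -/
theorem stability_space_of_filtered_module
    (K : Type) [Field K] (Q : FinQuiver) (M N : QRep K Q)
    (hM : ∃ i, Module.finrank K (M.M i) ≠ 0) (hN : ∃ i, Module.finrank K (N.M i) ≠ 0)
    (t : ℕ) (F : Fin (t + 1) → QSubRep N)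
    (h0 : ∀ i, (F 0).L i = ⊥) (hlast : ∀ i, (F (Fin.last t)).L i = ⊤)
    (hmono : ∀ j : Fin t, QSubRep.le (F j.castSucc) (F j.succ))
    (hfac : ∀ j : Fin t, RepIso (quotRep N (F j.castSucc) (F j.succ) (hmono j)) M) :
    stabSpace N = stabSpace M :=
  stability_space_of_filtered_module_general K Q M N hN t F h0 hlast hmono hfac
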